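/- Suppose κ ≥ ℵ₂ is regular, S ⊆ E^κ_{>ω} is stationary, and ⟨C_δ : δ ∈ S⟩ is a C-sequence witnessing CG(S, κ, ½, ⟨J_δ⟩): for every club D ⊆ κ there is δ ∈ S such that {β < δ : (β, min(C_δ \ (β+1))] ∩ D ≠ ∅} ∈ J_δ⁺. Then there exists a club D ⊆ κ such that ⟨Φ_D(C_δ) : δ ∈ S⟩ witnesses CG(S, κ, 1, ⟨J_δ⟩): for every club E ⊆ κ there is δ ∈ S such that {β < δ : min(Φ_D(C_δ) \ (β+1)) ∈ E} ∈ J_δ⁺. -/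

import Mathlib

/-!
Suppose the conclusion fails, so every club `D` has a club `E_D` on which `⟨Φ_D(C_δ) : δ ∈ S⟩`
guesses nowhere `J_δ`-positively. Iterate `D_{n+1} = acc(D_n ∩ E_{D_n})` from `D_0 = κ` and
feed `D_ω = ⋂ₙ D_n` to the hypothesis, obtaining `δ ∈ S` and a `J_δ`-positive set `B`. For
`β ∈ B` with `η = min(C_δ \ (β+1))`, the successor of `β` in `Φ_{D_n}(C_δ)` is
`s_n = sup(D_n ∩ η)`. The `s_n` are non-increasing and bounded below by a point of
`D_ω ∩ (β, η]`, so they stabilise: `s_n = s_{n+1} ∈ D_{n+1} ⊆ E_{D_n}`. Hence `B` is covered by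
countably many members of `J_δ`, impossible as `J_δ` is `cf(δ)`-additive and `cf(δ) > ω`.
-/

open Set Ordinal

noncomputable section

abbrev O : Type 1 := Ordinal.{0}

/-- `ssup A` is the strict supremum of a set of ordinals. -/
def ssup (A : Set O) : O := sSup ((· + 1) '' A)

/-- `acc⁺(A)`: accumulation points below the strict sup. -/
def accP (A : Set O) : Set O := {α | α < ssup A ∧ 0 < α ∧ sSup (A ∩ Iio α) = α}

def accOf (A : Set O) : Set O := A ∩ accP A

def nacc (A : Set O) : Set O := A \ accOf A

def clOf (A : Set O) : Set O := A ∪ accP A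

/-- order type of a set of ordinals -/
def otp (A : Set O) : Ordinal.{1} := Ordinal.type (Subrel ((· < ·) : O → O → Prop) (· ∈ A))

/-- lift a small ordinal one universe up -/
def olift (a : O) : Ordinal.{1} := Ordinal.lift.{1} a

/-- `suc_σ(A)`: elements of `A` whose index in `A` is `j+1` for some `j < σ`. -/
def sucSet (σ : Ordinal.{1}) (A : Set O) : Set O := {β | β ∈ A ∧ ∃ j < σ, otp (A ∩ Iio β) = j + 1}

def UnbIn (A : Set O) (δ : O) : Prop := ∀ α < δ, ∃ β ∈ A, α < β ∧ β < δ

def IsClubIn (C : Set O) (δ : O) : Prop :=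
  C ⊆ Iio δ ∧ UnbIn C δ ∧ ∀ α < δ, 0 < α → sSup (C ∩ Iio α) = α → α ∈ C

def IsStatIn (S : Set O) (δ : O) : Prop :=
  S ⊆ Iio δ ∧ ∀ D, IsClubIn D δ → (S ∩ D).Nonempty

def Ecof (κ : O) (lam : Cardinal.{0}) : Set O := {δ | δ < κ ∧ δ.cof = lam}

def PhiSup (B x : Set O) : Set O :=
  if sSup (x ∩ B) = sSup x then clOf (x ∩ B) else x \ Iio (sSup (x ∩ B))

def PhiD (D x : Set O) : Set O :=
  if sSup (D ∩ Iio (sSup x)) = sSup x then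
    {γ | ∃ η ∈ x, sInf D < η ∧ γ = sSup (D ∩ Iio η)}
  else x \ Iio (sSup (D ∩ Iio (sSup x)))

/-- `cf(δ)`-additive proper ideal on `δ` extending the bounded ideal. -/
def GoodIdeal (δ : O) (J : Set (Set O)) : Prop :=
  (∀ A B : Set O, A ⊆ B → B ∈ J → A ∈ J) ∧
  (Iio δ ∉ J) ∧
  (∀ B : Set O, B ⊆ Iio δ → sSup B < δ → B ∈ J) ∧
  (∀ ξ < (Ordinal.cof δ).ord, ∀ f : O → Set O, (∀ i < ξ, f i ∈ J) → (⋃ i ∈ Iio ξ, f i) ∈ J)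

def accIn (θ : O) (A : Set O) : Set O := {α | α < θ ∧ 0 < α ∧ sSup (A ∩ Iio α) = α}

lemma sSup_inter_Iio_le (A : Set O) (a : O) : sSup (A ∩ Iio a) ≤ a :=
  csSup_le' fun _ h => h.2.le

lemma sSup_inter_Iio_mono {A B : Set O} {a b : O} (hAB : A ⊆ B) (hab : a ≤ b) :
    sSup (A ∩ Iio a) ≤ sSup (B ∩ Iio b) :=
  csSup_le_csSup' bddAbove_Iio.inter_of_right (inter_subset_inter hAB (Iio_subset_Iio hab))

lemma sSup_inter_Iio_eq_of_subset {A B : Set O} {α : O} (hAB : A ⊆ B)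
    (hA : sSup (A ∩ Iio α) = α) : sSup (B ∩ Iio α) = α :=
  le_antisymm (sSup_inter_Iio_le B α) (hA.ge.trans (sSup_inter_Iio_mono hAB le_rfl))

lemma UnbIn.sSup_inter_Iio_eq {A : Set O} {δ : O} (h : UnbIn A δ) : sSup (A ∩ Iio δ) = δ := by
  refine le_antisymm (sSup_inter_Iio_le A δ) (le_of_forall_lt fun t ht => ?_)
  obtain ⟨a, ha, hta, haδ⟩ := h t ht
  exact hta.trans_le (le_csSup bddAbove_Iio.inter_of_right ⟨ha, haδ⟩)

lemma UnbIn.of_sSup_eq {A B : Set O} {δ : O} (hB : sSup B = δ)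
    (h : ∀ β ∈ B, ∃ a ∈ A, β < a ∧ a < δ) : UnbIn A δ := fun t ht => by
  obtain ⟨β, hβ, htβ⟩ := exists_lt_of_lt_csSup' (hB ▸ ht)
  obtain ⟨a, ha, hβa, haδ⟩ := h β hβ
  exact ⟨a, ha, htβ.trans hβa, haδ⟩

section Clubs

variable {θ : O}

lemma IsClubIn.sSup_eq {C : Set O} (h : IsClubIn C θ) : sSup C = θ := by
  rw [← inter_eq_left.mpr h.1]
  exact h.2.1.sSup_inter_Iio_eq

lemma IsClubIn.sInf_inter_Ioi_mem {C : Set O} (h : IsClubIn C θ) {β : O} (hβ : β < θ) :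
    sInf (C ∩ Ioi β) ∈ C ∩ Ioi β :=
  csInf_mem (let ⟨c, hc, hβc, _⟩ := h.2.1 β hβ; ⟨c, hc, hβc⟩)

lemma IsClubIn.sSup_mem {D X : Set O} (hD : IsClubIn D θ) (hXD : X ⊆ D) (hX : X.Nonempty)
    (hbdd : BddAbove X) (hlt : sSup X < θ) : sSup X ∈ D := by
  by_cases hmem : sSup X ∈ X
  · exact hXD hmem
  obtain ⟨x, hx⟩ := hX
  have hxs : x < sSup X := (le_csSup hbdd hx).lt_of_ne fun h => hmem (h ▸ hx)
  refine hD.2.2 _ hlt (zero_le.trans_lt hxs) (le_antisymm (sSup_inter_Iio_le D _) ?_)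
  refine le_of_forall_lt fun t ht => ?_
  obtain ⟨y, hy, hty⟩ := exists_lt_of_lt_csSup' ht
  have hys : y < sSup X := (le_csSup hbdd hy).lt_of_ne fun h => hmem (h ▸ hy)
  exact hty.trans_le (le_csSup bddAbove_Iio.inter_of_right ⟨hXD hy, hys⟩)

lemma isClubIn_Iio (hθ : Order.IsSuccLimit θ) : IsClubIn (Iio θ) θ :=
  ⟨subset_rfl, fun α hα => ⟨Order.succ α, hθ.succ_lt hα, Order.lt_succ α, hθ.succ_lt hα⟩,
    fun _ hα _ _ => hα⟩

lemma accIn_subset {A : Set O} (hA : IsClubIn A θ) : accIn θ A ⊆ A :=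
  fun α h => hA.2.2 α h.1 h.2.1 h.2.2

lemma accIn_mono {A B : Set O} (hAB : A ⊆ B) : accIn θ A ⊆ accIn θ B :=
  fun _ ⟨hαθ, h0, hsup⟩ => ⟨hαθ, h0, sSup_inter_Iio_eq_of_subset hAB hsup⟩

variable (hθ : Cardinal.aleph0 < θ.cof)
include hθ

lemma exists_forall_sSup_inter_Iio_eq {ι : Type} [Countable ι] [Nonempty ι] {D : ι → Set O}
    (hD : ∀ i, UnbIn (D i) θ) {α : O} (hα : α < θ) :
    ∃ s, α < s ∧ s < θ ∧ ∀ i, sSup (D i ∩ Iio s) = s := by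
  choose! g hg using hD
  have hcard : ∀ {ι' : Type} [Countable ι'], Cardinal.mk ι' < θ.cof :=
    Cardinal.mk_le_aleph0.trans_lt hθ
  let a : ℕ → O := fun k => Nat.rec α (fun _ x => ⨆ i, g i x) k
  have ha : ∀ k, a k < θ := fun k => by
    induction k with
    | zero => exact hα
    | succ k ih => exact iSup_lt_of_lt_cof hcard fun i => (hg i _ ih).2.2
  have hstep : ∀ k i, a k < g i (a k) ∧ g i (a k) ≤ a (k + 1) :=
    fun k i => ⟨(hg i _ (ha k)).2.1, Ordinal.le_iSup (fun i => g i (a k)) i⟩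
  have has : ∀ k, a k < ⨆ k, a k := fun k =>
    (hstep k (Classical.arbitrary ι)).1.trans_le
      ((hstep k _).2.trans (Ordinal.le_iSup a (k + 1)))
  refine ⟨⨆ k, a k, has 0, iSup_lt_of_lt_cof hcard ha, fun i => ?_⟩
  refine le_antisymm (sSup_inter_Iio_le _ _) (Ordinal.iSup_le fun k => ?_)
  exact (hstep k i).1.le.trans (le_csSup bddAbove_Iio.inter_of_right
    ⟨(hg i _ (ha k)).1, (hstep k i).2.trans_lt (has (k + 1))⟩)

lemma IsClubIn.iInter {ι : Type} [Countable ι] [Nonempty ι] {D : ι → Set O}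
    (hD : ∀ i, IsClubIn (D i) θ) : IsClubIn (⋂ i, D i) θ := by
  refine ⟨(iInter_subset D (Classical.arbitrary ι)).trans (hD _).1, fun α hα => ?_,
    fun α hα h0 hsup => mem_iInter.mpr fun i =>
      (hD i).2.2 α hα h0 (sSup_inter_Iio_eq_of_subset (iInter_subset D i) hsup)⟩
  obtain ⟨s, hαs, hsθ, hs⟩ := exists_forall_sSup_inter_Iio_eq hθ (fun i => (hD i).2.1) hα
  exact ⟨s, mem_iInter.mpr fun i => (hD i).2.2 s hsθ (zero_le.trans_lt hαs) (hs i), hαs, hsθ⟩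

lemma IsClubIn.inter {D E : Set O} (hD : IsClubIn D θ) (hE : IsClubIn E θ) :
    IsClubIn (D ∩ E) θ := by
  rw [inter_eq_iInter]
  exact IsClubIn.iInter hθ fun b => by cases b <;> assumption

lemma isClubIn_accIn {A : Set O} (hA : IsClubIn A θ) : IsClubIn (accIn θ A) θ := by
  refine ⟨fun α h => h.1, fun α hα => ?_, fun α hα h0 hsup => ⟨hα, h0, ?_⟩⟩
  · obtain ⟨s, hαs, hsθ, hs⟩ := exists_forall_sSup_inter_Iio_eq hθ (fun _ : Unit => hA.2.1) hα
    exact ⟨s, ⟨hsθ, zero_le.trans_lt hαs, hs ()⟩, hαs, hsθ⟩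
  · refine le_antisymm (sSup_inter_Iio_le A α) (hsup.ge.trans (csSup_le' fun u hu => ?_))
    exact hu.1.2.2.ge.trans (sSup_inter_Iio_mono subset_rfl hu.2.le)

lemma exists_accIn_seq (F : Set O → Set O) (hF : ∀ A, IsClubIn A θ → IsClubIn (F A) θ) :
    ∃ D : ℕ → Set O, (∀ n, IsClubIn (D n) θ) ∧ (∀ n, D (n + 1) ⊆ accIn θ (D n)) ∧
      ∀ n, D (n + 1) ⊆ F (D n) := by
  have hθlim : Order.IsSuccLimit θ := one_lt_cof_iff.mp (Cardinal.one_lt_aleph0.trans hθ)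
  let step : Set O → Set O := fun A => accIn θ (A ∩ F A)
  have hstep : ∀ A, IsClubIn A θ → IsClubIn (step A) θ :=
    fun A hA => isClubIn_accIn hθ (hA.inter hθ (hF A hA))
  have hclub : ∀ n, IsClubIn (step^[n] (Iio θ)) θ := fun n => by
    induction n with
    | zero => exact isClubIn_Iio hθlim
    | succ n ih => rw [Function.iterate_succ_apply']; exact hstep _ ih
  refine ⟨fun n => step^[n] (Iio θ), hclub, fun n => ?_, fun n => ?_⟩ <;>
    simp only [Function.iterate_succ_apply']
  · exact accIn_mono inter_subset_left
  · exact (accIn_subset ((hclub n).inter hθ (hF _ (hclub n)))).trans inter_subset_right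

end Clubs

lemma sInf_PhiD_inter_Ioi {D x : Set O} {β : O} (hD : sSup (D ∩ Iio (sSup x)) = sSup x)
    (hx : (x ∩ Ioi β).Nonempty) (hβ : β < sSup (D ∩ Iio (sInf (x ∩ Ioi β)))) :
    sInf (PhiD D x ∩ Ioi β) = sSup (D ∩ Iio (sInf (x ∩ Ioi β))) := by
  set η := sInf (x ∩ Ioi β)
  rw [PhiD, if_pos hD]
  obtain ⟨d, ⟨hdD, hdη⟩, -⟩ := exists_lt_of_lt_csSup' (zero_le.trans_lt hβ)
  have hmem : sSup (D ∩ Iio η) ∈ {γ | ∃ η' ∈ x, sInf D < η' ∧ γ = sSup (D ∩ Iio η')} ∩ Ioi β :=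
    ⟨⟨η, (csInf_mem hx).1, (csInf_le' hdD).trans_lt hdη, rfl⟩, hβ⟩
  refine le_antisymm (csInf_le' hmem) (le_csInf ⟨_, hmem⟩ ?_)
  rintro _ ⟨⟨η', hη'x, -, rfl⟩, hβη'⟩
  have hηη' : η ≤ η' := csInf_le' ⟨hη'x, hβη'.trans_le (sSup_inter_Iio_le D η')⟩
  exact sSup_inter_Iio_mono subset_rfl hηη'

section Ideals

variable {δ : O} {J : Set (Set O)}

lemma GoodIdeal.sSup_eq_of_notMem (hJ : GoodIdeal δ J) {B : Set O} (hB : B ⊆ Iio δ)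
    (hBJ : B ∉ J) : sSup B = δ :=
  (csSup_le' fun _ h => (hB h).le).antisymm (not_lt.mp fun h => hBJ (hJ.2.2.1 B hB h))

lemma GoodIdeal.iUnion_nat_mem (hJ : GoodIdeal δ J) (hδ : Cardinal.aleph0 < δ.cof)
    {f : ℕ → Set O} (hf : ∀ n, f n ∈ J) : ⋃ n, f n ∈ J := by
  let g : O → Set O := fun i => ⋃ (n : ℕ) (_ : (n : O) = i), f n
  have hg : ∀ i < ω, g i ∈ J := fun i hi => by
    obtain ⟨n, rfl⟩ := lt_omega0.mp hi
    refine hJ.1 _ (f n) (iUnion₂_subset fun m hm => ?_) (hf n)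
    rw [Nat.cast_inj.mp hm]
  refine hJ.1 _ _ (iUnion_subset fun n => ?_) (hJ.2.2.2 ω ?_ g hg)
  · exact fun x hx => mem_biUnion (natCast_lt_omega0 n) (mem_iUnion₂.mpr ⟨n, rfl, hx⟩)
  · rw [← Cardinal.ord_aleph0]
    exact Cardinal.ord_lt_ord.mpr hδ

end Ideals

lemma exists_sInf_PhiD_inter_Ioi_mem {θ δ β γ : O} {C : Set O} {D : ℕ → Set O}
    (hD : ∀ n, IsClubIn (D n) θ) (hacc : ∀ n, D (n + 1) ⊆ accIn θ (D n))
    (hδθ : δ < θ) (hC : IsClubIn C δ) (hunb : ∀ n, UnbIn (D n) δ) (hβ : β < δ)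
    (hγ : γ ∈ Ioc β (sInf (C ∩ Ioi β))) (hγD : ∀ n, γ ∈ D n) :
    ∃ n, sInf (PhiD (D n) C ∩ Ioi β) ∈ D (n + 1) := by
  set η := sInf (C ∩ Ioi β)
  have hηδ : η < δ := hC.1 (hC.sInf_inter_Ioi_mem hβ).1
  set s : ℕ → O := fun n => sSup (D n ∩ Iio η)
  have hγs : ∀ n, γ ≤ s n := fun n =>
    (hacc n (hγD (n + 1))).2.2.ge.trans (sSup_inter_Iio_mono subset_rfl hγ.2)
  obtain ⟨n, hn⟩ := WellFounded.not_rel_apply_succ (r := (· < ·)) s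
  have hsn : s (n + 1) = s n :=
    (sSup_inter_Iio_mono (fun _ hx => accIn_subset (hD n) (hacc n hx)) le_rfl).antisymm
      (not_lt.mp hn)
  have hne : (D (n + 1) ∩ Iio η).Nonempty :=
    let ⟨x, hx, _⟩ := exists_lt_of_lt_csSup' (zero_le.trans_lt (hγ.1.trans_le (hγs (n + 1))))
    ⟨x, hx⟩
  have hPhi : sInf (PhiD (D n) C ∩ Ioi β) = s n :=
    sInf_PhiD_inter_Ioi (by rw [hC.sSup_eq]; exact (hunb n).sSup_inter_Iio_eq)
      ⟨_, hC.sInf_inter_Ioi_mem hβ⟩ (hγ.1.trans_le (hγs n))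
  refine ⟨n, ?_⟩
  rw [hPhi, ← hsn]
  exact (hD (n + 1)).sSup_mem inter_subset_left hne bddAbove_Iio.inter_of_right
    ((sSup_inter_Iio_le _ _).trans_lt (hηδ.trans hδθ))

theorem statement17_general (κ : Cardinal.{0}) (hκ : κ.IsRegular) (hκ2 : Cardinal.aleph 2 ≤ κ)
    (S : Set O) (hSsub : S ⊆ {δ : O | δ < κ.ord ∧ Cardinal.aleph0 < δ.cof})
    (J : O → Set (Set O)) (hJ : ∀ δ ∈ S, GoodIdeal δ (J δ))
    (C : O → Set O) (hC : ∀ δ ∈ S, IsClubIn (C δ) δ)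
    (hguess : ∀ D, IsClubIn D κ.ord → ∃ δ ∈ S,
      {β | β < δ ∧ (Ioc β (sInf (C δ ∩ Ioi β)) ∩ D).Nonempty} ∉ J δ) :
    ∃ D, IsClubIn D κ.ord ∧
      ∀ E, IsClubIn E κ.ord → ∃ δ ∈ S,
        {β | β < δ ∧ sInf (PhiD D (C δ) ∩ Ioi β) ∈ E} ∉ J δ := by
  by_contra! hcon
  choose! F hFclub hFJ using hcon
  have hθ : Cardinal.aleph0 < κ.ord.cof := by
    rw [hκ.cof_ord]
    exact (Cardinal.aleph0_lt_aleph.mpr two_pos).trans_le hκ2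
  obtain ⟨D, hDclub, hDacc, hDF⟩ := exists_accIn_seq hθ F hFclub
  obtain ⟨δ, hδS, hB⟩ := hguess (⋂ n, D n) (IsClubIn.iInter hθ hDclub)
  obtain ⟨hδκ, hδcof⟩ := hSsub hδS
  have hBsup := (hJ δ hδS).sSup_eq_of_notMem (fun _ h => h.1) hB
  have hunb : ∀ n, UnbIn (D n) δ := fun n =>
    UnbIn.of_sSup_eq hBsup fun β ⟨hβ, γ, hγ, hγD⟩ => ⟨γ, mem_iInter.mp hγD n, hγ.1,
        hγ.2.trans_lt ((hC δ hδS).1 ((hC δ hδS).sInf_inter_Ioi_mem hβ).1)⟩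
  refine hB ((hJ δ hδS).1 _ _ ?_
    ((hJ δ hδS).iUnion_nat_mem hδcof fun n => hFJ _ (hDclub n) δ hδS))
  rintro β ⟨hβ, γ, hγ, hγD⟩
  obtain ⟨n, hn⟩ := exists_sInf_PhiD_inter_Ioi_mem hDclub hDacc hδκ (hC δ hδS) hunb hβ hγ
    (mem_iInter.mp hγD)
  exact mem_iUnion.mpr ⟨n, hβ, hDF n hn⟩

/-- upgrading `σ = ½` to `σ = 1` via `Φ_D`. -/
theorem statement17 (κ : Cardinal.{0}) (hκ : κ.IsRegular) (hκ2 : Cardinal.aleph 2 ≤ κ)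
    (S : Set O) (hSsub : S ⊆ {δ : O | δ < κ.ord ∧ Cardinal.aleph0 < δ.cof})
    (hS : IsStatIn S κ.ord)
    (J : O → Set (Set O)) (hJ : ∀ δ ∈ S, GoodIdeal δ (J δ))
    (C : O → Set O) (hC : ∀ δ ∈ S, IsClubIn (C δ) δ)
    (hguess : ∀ D, IsClubIn D κ.ord → ∃ δ ∈ S,
      {β | β < δ ∧ (Ioc β (sInf (C δ ∩ Ioi β)) ∩ D).Nonempty} ∉ J δ) :
    ∃ D, IsClubIn D κ.ord ∧
      ∀ E, IsClubIn E κ.ord → ∃ δ ∈ S,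
        {β | β < δ ∧ sInf (PhiD D (C δ) ∩ Ioi β) ∈ E} ∉ J δ :=
  statement17_general κ hκ hκ2 S hSsub J hJ C hC hguess
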